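/- Semantic soundness of the domain/range application rule: if Γ ⊨ f : F and Γ ⊨ t : Dom(F), then Γ ⊨ f t : Range(F). That is, in any well-interpreted environment (H, ρ) for Γ, evaluating f yields a closure, evaluating t yields a value in the domain interpretation, and the application terminates in a value in ⟦Range(F)⟧ρ↓•. -/

import Mathlib

/-- Selectors for selection paths. -/
inductive Sel
  | dom | ran
  deriving DecidableEq

/-- A selection path is a finite list of selectors (head is the next projection to resolve). -/
abbrev SelPath := List Sel

/-- SelPath positivity: flipped by `dom`, preserved by `ran`. -/
def pos : SelPath → Bool
  | [] => true
  | .dom :: s => !(pos s)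
  | .ran :: s => pos s

/-- Types of F<:^DR (de Bruijn indices for type variables). -/
inductive Ty
  | base | top | bot
  | tvar : Nat → Ty
  | arrow : Ty → Ty → Ty
  | all : Ty → Ty → Ty        -- bounded quantification: bound, body
  | dom : Ty → Ty
  | range : Ty → Ty
  deriving DecidableEq

/-- Terms of F<:^DR (de Bruijn indices for term variables). -/
inductive Tm
  | cst
  | var : Nat → Tm
  | abs : Tm → Tm
  | app : Tm → Tm → Tm
  | tabs : Tm → Tm
  | tapp : Tm → Ty → Tm
  deriving DecidableEq

/-- Values: constants, closures, and type-closures. -/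
inductive Val
  | cst
  | clos : List Val → Tm → Val
  | tclos : List Val → Tm → Val

/-- Big-step evaluation with environments. -/
inductive Eval : List Val → Tm → Val → Prop
  | cst : Eval H .cst .cst
  | var : H[x]? = some v → Eval H (.var x) v
  | abs : Eval H (.abs t) (.clos H t)
  | tabs : Eval H (.tabs t) (.tclos H t)
  | app : Eval H t₁ (.clos H' t') → Eval H t₂ vx → Eval (vx :: H') t' v →
      Eval H (.app t₁ t₂) v
  | tapp : Eval H t (.tclos H' t') → Eval H' t' v → Eval H (.tapp t T) v

/-- A value type: a set of (value, selection path) pairs. -/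
abbrev VTy := Set (Val × SelPath)

/-- Projection of a value type at a selection path. -/
def proj (V : VTy) (s : SelPath) : Set Val := {v | (v, s) ∈ V}

/-- Sub-value-interpretation relation `≤ₛ`, positivity aware. -/
def vstp (V₁ V₂ : VTy) : Prop :=
  ∀ s : SelPath, (pos s = true → proj V₁ s ⊆ proj V₂ s) ∧
    (pos s = false → proj V₂ s ⊆ proj V₁ s)

/-- Well-formed functionality property. -/
def WFFun (V : VTy) : Prop :=
  ∀ v s, (v, s) ∈ V → ∀ v₁, (v₁, s ++ [Sel.dom]) ∈ V →
    ∃ H t, v = Val.clos H t ∧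
      ∃ v₂, Eval (v₁ :: H) t v₂ ∧ (v₂, s ++ [Sel.ran]) ∈ V

/-- Value interpretation of types, with delayed projections via selection paths. -/
def interp : Ty → List VTy → SelPath → Set Val
  | .base, _, [] => {Val.cst}
  | .base, _, sl :: s => if pos (sl :: s) then Set.univ else ∅
  | .top, _, s => if pos s then Set.univ else ∅
  | .bot, _, s => if pos s then ∅ else Set.univ
  | .tvar X, ρ, s => {v | ∃ V, ρ[X]? = some V ∧ (v, s) ∈ V}
  | .arrow T₁ T₂, ρ, [] =>
      {v | ∃ H t, v = Val.clos H t ∧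
        ∀ v₁ ∈ interp T₁ ρ [], ∃ v₂, Eval (v₁ :: H) t v₂ ∧ v₂ ∈ interp T₂ ρ []}
  | .arrow T₁ _, ρ, .dom :: s => interp T₁ ρ s
  | .arrow _ T₂, ρ, .ran :: s => interp T₂ ρ s
  | .dom T, ρ, s => interp T ρ (.dom :: s)
  | .range T, ρ, s => interp T ρ (.ran :: s)
  | .all U T, ρ, [] =>
      {v | ∃ H t, v = Val.tclos H t ∧
        ∀ V : VTy, WFFun V → vstp V {p | p.1 ∈ interp U ρ p.2} →
          ∃ v', Eval H t v' ∧ v' ∈ interp T (V :: ρ) []}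
  | .all _ _, _, sl :: s => if pos (sl :: s) then Set.univ else ∅

/-- Interpretation of a type as a value type (all paths at once). -/
def interpV (ρ : List VTy) (T : Ty) : VTy := {p | p.1 ∈ interp T ρ p.2}

/-- Shifting of type variables `≥ c` by `d`. -/
def shiftTy (d : Nat) : Ty → Nat → Ty
  | .base, _ => .base
  | .top, _ => .top
  | .bot, _ => .bot
  | .tvar X, c => if c ≤ X then .tvar (X + d) else .tvar X
  | .arrow a b, c => .arrow (shiftTy d a c) (shiftTy d b c)
  | .all u t, c => .all (shiftTy d u c) (shiftTy d t (c + 1))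
  | .dom t, c => .dom (shiftTy d t c)
  | .range t, c => .range (shiftTy d t c)

/-- Capture-avoiding substitution of `U` for type variable `k`. -/
def substTy (U : Ty) : Ty → Nat → Ty
  | .base, _ => .base
  | .top, _ => .top
  | .bot, _ => .bot
  | .tvar X, k => if X = k then shiftTy k U 0
      else if k < X then .tvar (X - 1) else .tvar X
  | .arrow a b, k => .arrow (substTy U a k) (substTy U b k)
  | .all u t, k => .all (substTy U u k) (substTy U t (k + 1))
  | .dom t, k => .dom (substTy U t k)
  | .range t, k => .range (substTy U t k)

/-- Subtyping of F<:^DR. `Δ` records bounds of type variables. -/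
inductive Stp : List Ty → Ty → Ty → Prop
  | top : Stp Δ T .top
  | bot : Stp Δ .bot T
  | refl : Stp Δ T T
  | trans : Stp Δ T₁ T₂ → Stp Δ T₂ T₃ → Stp Δ T₁ T₃
  | tvar : Δ[X]? = some U → Stp Δ (.tvar X) (shiftTy (X + 1) U 0)
  | arrow : Stp Δ T₁ S₁ → Stp Δ S₂ T₂ → Stp Δ (.arrow S₁ S₂) (.arrow T₁ T₂)
  | all : Stp (U :: Δ) S T → Stp Δ (.all U S) (.all U T)
  | domIntro : Stp Δ T₁ (.dom (.arrow T₁ T₂))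
  | domElim : Stp Δ (.dom (.arrow T₁ T₂)) T₁
  | ranIntro : Stp Δ T₂ (.range (.arrow T₁ T₂))
  | ranElim : Stp Δ (.range (.arrow T₁ T₂)) T₂
  | domCongr : Stp Δ T S → Stp Δ (.dom S) (.dom T)
  | ranCongr : Stp Δ S T → Stp Δ (.range S) (.range T)

/-- Typing of F<:^DR, with the domain/range application rule `appDR` in place of
    the standard application rule. -/
inductive HasType : List Ty → List Ty → Tm → Ty → Prop
  | cst : HasType Δ Γ .cst .base
  | var : Γ[x]? = some T → HasType Δ Γ (.var x) T
  | sub : HasType Δ Γ t T₁ → Stp Δ T₁ T₂ → HasType Δ Γ t T₂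
  | abs : HasType Δ (T₁ :: Γ) t T₂ → HasType Δ Γ (.abs t) (.arrow T₁ T₂)
  | appDR : HasType Δ Γ f F → HasType Δ Γ t (.dom F) →
      HasType Δ Γ (.app f t) (.range F)
  | tabs : HasType (U :: Δ) Γ t T → HasType Δ Γ (.tabs t) (.all U T)
  | tapp : Stp Δ S U → HasType Δ Γ f (.all U T) →
      HasType Δ Γ (.tapp f S) (substTy S T 0)

/-- Environment interpretation: `(H, ρ)` well-interprets `(Δ, Γ)`. -/
def EnvOK (Δ Γ : List Ty) (H : List Val) (ρ : List VTy) : Prop :=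
  H.length = Γ.length ∧ ρ.length = Δ.length ∧
  (∀ x T, Γ[(x : Nat)]? = some T → ∃ v, H[x]? = some v ∧ v ∈ interp T ρ []) ∧
  (∀ X U, Δ[(X : Nat)]? = some U → ∃ V, ρ[X]? = some V ∧ WFFun V ∧
    vstp V (interpV ρ U))

/-- Semantic typing. -/
def SemType (Δ Γ : List Ty) (t : Tm) (T : Ty) : Prop :=
  ∀ H ρ, EnvOK Δ Γ H ρ → ∃ v, Eval H t v ∧ v ∈ interp T ρ []

/-- Semantic subtyping. -/
def SemStp (Δ Γ : List Ty) (T₁ T₂ : Ty) : Prop :=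
  ∀ H ρ, EnvOK Δ Γ H ρ → vstp (interpV ρ T₁) (interpV ρ T₂)

/-! The application rule reduces to the fact that `interp F ρ` is functional at every selection
path, which holds by induction on `F` once every `V ∈ ρ` is: type variables take it from `ρ`,
arrows and `Dom`/`Range` hand it to a component or to a longer path, and the remaining types
are inhabited only at paths of one fixed polarity, while `s` and `s ++ [dom]` have opposite
polarities. -/

lemma pos_append_dom (s : SelPath) : pos (s ++ [Sel.dom]) = !pos s := by
  induction s with
  | nil => rfl
  | cons a s ih => cases a <;> simp [pos, ih]

lemma pos_append_dom_ne {s : SelPath} {b : Bool} (h : pos s = b) : pos (s ++ [Sel.dom]) ≠ b := by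
  simp [pos_append_dom, h]

section interp

variable {ρ : List VTy} {s : SelPath} {v : Val}

lemma pos_of_mem_interp_base (hv : v ∈ interp .base ρ s) : pos s = true := by
  cases s <;> simp_all [interp, pos]

lemma pos_of_mem_interp_top (hv : v ∈ interp .top ρ s) : pos s = true := by
  simp_all [interp]

lemma pos_of_mem_interp_bot (hv : v ∈ interp .bot ρ s) : pos s = false := by
  simp_all [interp]

lemma pos_of_mem_interp_all {U T : Ty} (hv : v ∈ interp (.all U T) ρ s) : pos s = true := by
  cases s <;> simp_all [interp, pos]

end interp

lemma EnvOK.wfFun {Δ Γ : List Ty} {H : List Val} {ρ : List VTy} (hok : EnvOK Δ Γ H ρ) :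
    ∀ V ∈ ρ, WFFun V := by
  obtain ⟨-, hlen, -, hΔ⟩ := hok
  intro V hV
  obtain ⟨X, hX, rfl⟩ := List.getElem_of_mem hV
  obtain ⟨V', hV', hwf, -⟩ := hΔ X Δ[X] (List.getElem?_eq_getElem (hlen ▸ hX))
  rw [List.getElem?_eq_getElem hX, Option.some_inj] at hV'
  exact hV' ▸ hwf

theorem interp_functional {ρ : List VTy} (hρ : ∀ V ∈ ρ, WFFun V) (F : Ty) (s : SelPath)
    {v v₁ : Val} (hv : v ∈ interp F ρ s) (hv₁ : v₁ ∈ interp F ρ (s ++ [Sel.dom])) :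
    ∃ H t, v = Val.clos H t ∧ ∃ v₂, Eval (v₁ :: H) t v₂ ∧ v₂ ∈ interp F ρ (s ++ [Sel.ran]) := by
  induction F generalizing s v v₁ with
  | base =>
    exact absurd (pos_of_mem_interp_base hv₁) (pos_append_dom_ne (pos_of_mem_interp_base hv))
  | top =>
    exact absurd (pos_of_mem_interp_top hv₁) (pos_append_dom_ne (pos_of_mem_interp_top hv))
  | bot =>
    exact absurd (pos_of_mem_interp_bot hv₁) (pos_append_dom_ne (pos_of_mem_interp_bot hv))
  | all =>
    exact absurd (pos_of_mem_interp_all hv₁) (pos_append_dom_ne (pos_of_mem_interp_all hv))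
  | tvar X =>
    obtain ⟨V, hV, hvV⟩ := hv
    obtain ⟨V', hV', hv₁V⟩ := hv₁
    obtain rfl : V = V' := Option.some_inj.mp (hV.symm.trans hV')
    obtain ⟨H, t, rfl, v₂, hev, hv₂⟩ := hρ V (List.mem_of_getElem? hV) v s hvV v₁ hv₁V
    exact ⟨H, t, rfl, v₂, hev, V, hV, hv₂⟩
  | arrow T₁ T₂ ih₁ ih₂ =>
    match s, hv, hv₁ with
    | [], ⟨H, t, hvH, hfun⟩, hv₁ => exact ⟨H, t, hvH, hfun v₁ hv₁⟩
    | .dom :: s, hv, hv₁ => exact ih₁ s hv hv₁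
    | .ran :: s, hv, hv₁ => exact ih₂ s hv hv₁
  | dom T ih => exact ih (.dom :: s) hv hv₁
  | range T ih => exact ih (.ran :: s) hv hv₁

/-- semantic soundness of the domain/range application rule. -/
theorem semantic_appDR (Δ Γ : List Ty) (f t : Tm) (F : Ty)
    (hf : SemType Δ Γ f F) (ht : SemType Δ Γ t (.dom F)) :
    SemType Δ Γ (.app f t) (.range F) := by
  intro H ρ hok
  obtain ⟨vf, hevf, hvf⟩ := hf H ρ hok
  obtain ⟨vx, hevx, hvx⟩ := ht H ρ hok
  obtain ⟨H', t', rfl, v, hev, hv⟩ := interp_functional hok.wfFun F [] hvf hvx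
  exact ⟨v, .app hevf hevx hev, hv⟩
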